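/- Let Ω ⊂ ℝⁿ be a bounded open convex set, F a Finsler norm with polar F°, and p > 1. Define r^F_max(Ω) = max{F°(x) : x ∈ cl(Ω)}, M_F(Ω) = ∫_{∂Ω} (F°)^p F(ν) dH^{n-1}, P_F(Ω) = ∫_{∂Ω} F(ν) dH^{n-1}. Then M_F(Ω)/P_F(Ω) ≤ (r^F_max(Ω))^p, with equality if and only if Ω is a Wulff shape {F° < r} centered at the origin. -/

import Mathlib

/-!
The ratio is the mean of `(F°)^p` over `∂Ω` weighted by the positive density `F(ν)`, so it is at
most the maximum `(r_max)^p` of `(F°)^p` on `cl Ω`, with equality iff `F° = r_max` almost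
everywhere on `∂Ω`. The `(n-1)`-Hausdorff measure charges every relatively open piece of the
boundary of a convex body (the orthogonal projection of such a piece onto a hyperplane contains a
disc), so by continuity `F° = r_max` on all of `∂Ω`. Since `F°` and the gauge of `Ω` are both
positively homogeneous, this says `F° = r_max · gauge Ω`, i.e. `Ω = {F° < r_max}`. The boundary
measure is finite because `∂Ω` is covered by finitely many Lipschitz radial projections of
hyperplane discs.
-/

open MeasureTheory

noncomputable def polar {E : Type*} [NormedAddCommGroup E] [InnerProductSpace ℝ E]
    (F : E → ℝ) (v : E) : ℝ :=
  ⨆ ξ : {ξ : E // ξ ≠ 0}, (inner ℝ (ξ : E) v : ℝ) / F (ξ : E)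

open Metric Set Module Filter
open scoped RealInnerProductSpace NNReal ENNReal Topology

section Polar

variable {E : Type*} [NormedAddCommGroup E] [InnerProductSpace ℝ E] {F : E → ℝ} {a : ℝ}

lemma inner_div_le_norm_div (ha : 0 < a) (hlow : ∀ ξ, a * ‖ξ‖ ≤ F ξ) {ξ : E} (hξ : ξ ≠ 0)
    (v : E) : ⟪ξ, v⟫ / F ξ ≤ ‖v‖ / a := by
  have hξ' : 0 < ‖ξ‖ := norm_pos_iff.2 hξ
  calc ⟪ξ, v⟫ / F ξ ≤ ‖ξ‖ * ‖v‖ / (a * ‖ξ‖) :=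
        div_le_div₀ (by positivity) (real_inner_le_norm ξ v) (by positivity) (hlow ξ)
    _ = ‖v‖ / a := by field_simp

lemma le_polar (ha : 0 < a) (hlow : ∀ ξ, a * ‖ξ‖ ≤ F ξ) {ξ : E} (hξ : ξ ≠ 0) (v : E) :
    ⟪ξ, v⟫ / F ξ ≤ polar F v :=
  le_ciSup (f := fun ξ : {ξ : E // ξ ≠ 0} => ⟪(ξ : E), v⟫ / F ξ)
    ⟨‖v‖ / a, forall_mem_range.2 fun ξ => inner_div_le_norm_div ha hlow ξ.2 v⟩ ⟨ξ, hξ⟩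

lemma polar_pos (ha : 0 < a) (hlow : ∀ ξ, a * ‖ξ‖ ≤ F ξ) {x : E} (hx : x ≠ 0) :
    0 < polar F x := by
  have hFx : 0 < F x := (mul_pos ha (norm_pos_iff.2 hx)).trans_le (hlow x)
  have hxx : 0 < ⟪x, x⟫ := real_inner_self_pos.2 hx
  exact (div_pos hxx hFx).trans_le (le_polar ha hlow hx x)

lemma polar_smul_of_nonneg (F : E → ℝ) {t : ℝ} (ht : 0 ≤ t) (v : E) :
    polar F (t • v) = t * polar F v := by
  simp only [polar, real_inner_smul_right, mul_div_assoc, Real.mul_iSup_of_nonneg ht]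

lemma polar_zero (F : E → ℝ) : polar F 0 = 0 := by
  simpa using polar_smul_of_nonneg F le_rfl (0 : E)

lemma polar_nonneg (ha : 0 < a) (hlow : ∀ ξ, a * ‖ξ‖ ≤ F ξ) (x : E) : 0 ≤ polar F x := by
  rcases eq_or_ne x 0 with rfl | hx
  · exact (polar_zero F).ge
  · exact (polar_pos ha hlow hx).le

variable [Nontrivial E]

instance : Nonempty {ξ : E // ξ ≠ 0} := nonempty_subtype.2 (exists_ne 0)

lemma polar_le_add (ha : 0 < a) (hlow : ∀ ξ, a * ‖ξ‖ ≤ F ξ) (u v : E) :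
    polar F u ≤ polar F v + ‖u - v‖ / a := by
  refine ciSup_le fun ξ => ?_
  calc ⟪(ξ : E), u⟫ / F ξ = ⟪(ξ : E), v⟫ / F ξ + ⟪(ξ : E), u - v⟫ / F ξ := by
        rw [inner_sub_right, sub_div]; ring
    _ ≤ polar F v + ‖u - v‖ / a :=
        add_le_add (le_polar ha hlow ξ.2 v) (inner_div_le_norm_div ha hlow ξ.2 _)

lemma lipschitzWith_polar (ha : 0 < a) (hlow : ∀ ξ, a * ‖ξ‖ ≤ F ξ) :
    LipschitzWith (Real.toNNReal a⁻¹) (polar F) :=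
  LipschitzWith.of_le_add_mul _ fun u v => by
    rw [Real.coe_toNNReal _ (inv_nonneg.2 ha.le), dist_eq_norm, ← div_eq_inv_mul]
    exact polar_le_add ha hlow u v

lemma polar_rpow_mem_Icc [ProperSpace E] {Ω : Set E} (ha : 0 < a) (hlow : ∀ ξ, a * ‖ξ‖ ≤ F ξ)
    (hbd : Bornology.IsBounded Ω) {p : ℝ} (hp : 0 ≤ p) {x : E} (hx : x ∈ closure Ω) :
    polar F x ^ p ∈ Icc 0 (sSup (polar F '' closure Ω) ^ p) :=
  ⟨Real.rpow_nonneg (polar_nonneg ha hlow x) p, Real.rpow_le_rpow (polar_nonneg ha hlow x)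
    (le_csSup (hbd.isCompact_closure.image (lipschitzWith_polar ha hlow).continuous).bddAbove
      (mem_image_of_mem _ hx)) hp⟩

end Polar

section Gauge

variable {E : Type*} [NormedAddCommGroup E] [NormedSpace ℝ E] {Ω : Set E} {q : E → ℝ} {r : ℝ}

lemma inv_gauge_smul_mem_frontier (hΩ : Convex ℝ Ω) (h0 : Ω ∈ 𝓝 0) {x : E}
    (hgx : 0 < gauge Ω x) : (gauge Ω x)⁻¹ • x ∈ frontier Ω := by
  rw [← gauge_eq_one_iff_mem_frontier hΩ h0, gauge_smul_of_nonneg (inv_nonneg.2 hgx.le),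
    smul_eq_mul, inv_mul_cancel₀ hgx.ne']

lemma eq_gauge_mul_of_eqOn_frontier (hΩ : Convex ℝ Ω) (h0 : Ω ∈ 𝓝 0)
    (hbd : Bornology.IsBounded Ω) (hq : ∀ t : ℝ, 0 ≤ t → ∀ x, q (t • x) = t * q x)
    (hr : ∀ z ∈ frontier Ω, q z = r) (x : E) : q x = gauge Ω x * r := by
  rcases eq_or_ne x 0 with rfl | hx
  · simpa using hq 0 le_rfl 0
  · have hgx : 0 < gauge Ω x :=
      (gauge_pos (absorbent_nhds_zero h0) ((NormedSpace.isVonNBounded_iff ℝ).2 hbd)).2 hx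
    rw [← hr _ (inv_gauge_smul_mem_frontier hΩ h0 hgx), ← hq _ hgx.le, smul_inv_smul₀ hgx.ne']

lemma eq_setOf_lt_of_eqOn_frontier (hΩo : IsOpen Ω) (hΩ : Convex ℝ Ω) (h0 : (0 : E) ∈ Ω)
    (hbd : Bornology.IsBounded Ω) (hq : ∀ t : ℝ, 0 ≤ t → ∀ x, q (t • x) = t * q x)
    (hr0 : 0 < r) (hr : ∀ z ∈ frontier Ω, q z = r) : Ω = {x | q x < r} := by
  ext x
  rw [mem_ofPred_eq, eq_gauge_mul_of_eqOn_frontier hΩ (hΩo.mem_nhds h0) hbd hq hr,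
    mul_lt_iff_lt_one_left hr0, gauge_lt_one_iff_mem_interior hΩ (hΩo.mem_nhds h0),
    hΩo.interior_eq]

lemma frontier_nonempty_of_isBounded [Nontrivial E] (hne : Ω.Nonempty)
    (hbd : Bornology.IsBounded Ω) : (frontier Ω).Nonempty :=
  nonempty_frontier_iff.2 ⟨hne, fun h => NormedSpace.unbounded_univ ℝ E (h ▸ hbd)⟩

lemma forall_frontier_eq_sSup_iff [Nontrivial E] (hΩo : IsOpen Ω) (hΩ : Convex ℝ Ω)
    (h0 : (0 : E) ∈ Ω) (hbd : Bornology.IsBounded Ω) (hqc : Continuous q)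
    (hq : ∀ t : ℝ, 0 ≤ t → ∀ x, q (t • x) = t * q x) (hpos : ∀ x, x ≠ 0 → 0 < q x) :
    (∀ z ∈ frontier Ω, q z = sSup (q '' closure Ω)) ↔ ∃ r, 0 < r ∧ Ω = {x | q x < r} := by
  obtain ⟨z, hz⟩ := frontier_nonempty_of_isBounded ⟨0, h0⟩ hbd
  have hz0 : z ≠ 0 := by
    rintro rfl
    exact hz.2 (hΩo.interior_eq.symm ▸ h0)
  constructor
  · intro h
    have hr0 : 0 < sSup (q '' closure Ω) := h z hz ▸ hpos z hz0
    exact ⟨_, hr0, eq_setOf_lt_of_eqOn_frontier hΩo hΩ h0 hbd hq hr0 h⟩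
  · rintro ⟨r, -, rfl⟩
    have hfr : ∀ z ∈ frontier {x | q x < r}, q z = r := fun z hz =>
      frontier_lt_subset_eq hqc continuous_const hz
    have hmax : IsGreatest (q '' closure {x | q x < r}) r :=
      ⟨⟨z, frontier_subset_closure hz, hfr z hz⟩,
        forall_mem_image.2 fun x hx => closure_lt_subset_le hqc continuous_const hx⟩
    rwa [hmax.csSup_eq]

lemma exists_gauge_add_smul_eq_one {ε : ℝ} (hΩ : Convex ℝ Ω) (hε : 0 < ε)
    (hball : ball (0 : E) ε ⊆ Ω) {z w : E} (hz : gauge Ω z = 1) (hw : ‖w‖ < ε) :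
    ∃ t : ℝ, gauge Ω (w + t • z) = 1 ∧ |t - 1| ≤ ‖w‖ / ε := by
  have h0 : Ω ∈ 𝓝 (0 : E) := mem_of_superset (ball_mem_nhds 0 hε) hball
  have habs : Absorbent ℝ Ω := absorbent_nhds_zero h0
  have hle : ∀ x, gauge Ω x ≤ ‖x‖ / ε := fun x => (le_div_iff₀' hε).2 (mul_gauge_le_norm hball)
  have hsmul : ∀ t : ℝ, 0 ≤ t → gauge Ω (t • z) = t := fun t ht => by
    rw [gauge_smul_of_nonneg ht, hz, smul_eq_mul, mul_one]
  have hw1 : ‖w‖ / ε < 1 := (div_lt_one hε).2 hw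
  have hlower : ∀ t : ℝ, 0 ≤ t → t - ‖w‖ / ε ≤ gauge Ω (w + t • z) := fun t ht => by
    have := gauge_add_le hΩ habs (w + t • z) (-w)
    rw [add_neg_cancel_comm, hsmul t ht] at this
    linarith [norm_neg w ▸ hle (-w)]
  have hupper : ∀ t : ℝ, 0 ≤ t → gauge Ω (w + t • z) ≤ ‖w‖ / ε + t := fun t ht => by
    have := gauge_add_le hΩ habs w (t • z)
    rw [hsmul t ht] at this
    linarith [hle w]
  have hcont : ContinuousOn (fun t : ℝ => gauge Ω (w + t • z)) (Icc 0 2) :=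
    ((continuous_gauge hΩ h0).comp (by fun_prop)).continuousOn
  have hone : (1 : ℝ) ∈ Icc (gauge Ω (w + (0 : ℝ) • z)) (gauge Ω (w + (2 : ℝ) • z)) := by
    constructor
    · rw [zero_smul, add_zero]; linarith [hle w]
    · linarith [hlower 2 zero_le_two]
  obtain ⟨t, ht, hgt⟩ := intermediate_value_Icc zero_le_two hcont hone
  refine ⟨t, hgt, abs_sub_le_iff.2 ⟨?_, ?_⟩⟩
  · linarith [hlower t ht.1]
  · linarith [hupper t ht.1]

end Gauge

section Hausdorff

variable {E : Type*} [NormedAddCommGroup E] [InnerProductSpace ℝ E] [FiniteDimensional ℝ E]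
  [MeasurableSpace E] [BorelSpace E] {Ω : Set E} {d : ℕ}

lemma hausdorffMeasure_frontier_inter_pos (hd : finrank ℝ E = d + 1) (hΩ : Convex ℝ Ω)
    (h0 : Ω ∈ 𝓝 (0 : E)) {V : Set E} (hV : IsOpen V) {z : E} (hz : z ∈ frontier Ω)
    (hzV : z ∈ V) : 0 < μH[d] (frontier Ω ∩ V) := by
  obtain ⟨ε, hε, hball⟩ := Metric.mem_nhds_iff.1 h0
  obtain ⟨δ, hδ, hδV⟩ := Metric.isOpen_iff.1 hV z hzV
  have hgz : gauge Ω z = 1 := (gauge_eq_one_iff_mem_frontier hΩ h0).2 hz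
  have hz0 : z ≠ 0 := by
    rintro rfl
    simp at hgz
  have : Fact (finrank ℝ E = d + 1) := ⟨hd⟩
  set H : Submodule ℝ E := (ℝ ∙ z)ᗮ
  have hH : finrank ℝ H = d := Submodule.finrank_orthogonal_span_singleton hz0
  have hπz : H.orthogonalProjectionOnto z = 0 := Submodule.orthogonalProjectionOnto_eq_zero_iff.2
    (Submodule.le_orthogonal_orthogonal _ (Submodule.mem_span_singleton_self z))
  set ρ := min ε (δ / (1 + ‖z‖ / ε))
  have hρ : 0 < ρ := lt_min hε (by positivity)
  -- each small `w ⊥ z` is the projection of a boundary point `w + t • z` close to `z`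
  have hsub : ball (0 : H) ρ ⊆ H.orthogonalProjectionOnto '' (frontier Ω ∩ V) := by
    intro w hw
    replace hw : ‖(w : E)‖ < ε ∧ ‖(w : E)‖ < δ / (1 + ‖z‖ / ε) :=
      lt_min_iff.1 (mem_ball_zero_iff.1 hw)
    obtain ⟨t, hgt, ht⟩ := exists_gauge_add_smul_eq_one hΩ hε hball hgz (w := (w : E)) hw.1
    refine ⟨w + t • z, ⟨(gauge_eq_one_iff_mem_frontier hΩ h0).1 hgt, hδV ?_⟩, ?_⟩
    · rw [mem_ball, dist_eq_norm]
      calc ‖(w : E) + t • z - z‖ = ‖(w : E) + (t - 1) • z‖ := by rw [sub_smul, one_smul]; abel_nf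
        _ ≤ ‖(w : E)‖ + |t - 1| * ‖z‖ := by grw [norm_add_le, norm_smul, Real.norm_eq_abs]
        _ ≤ ‖(w : E)‖ + ‖(w : E)‖ / ε * ‖z‖ := by grw [ht]
        _ = ‖(w : E)‖ * (1 + ‖z‖ / ε) := by ring
        _ < δ / (1 + ‖z‖ / ε) * (1 + ‖z‖ / ε) := by gcongr; exact hw.2
        _ = δ := div_mul_cancel₀ _ (by positivity)
    · rw [map_add, map_smul, hπz, smul_zero, add_zero,
        Submodule.orthogonalProjectionOnto_mem_subspace_eq_self]
  calc 0 < μH[finrank ℝ H] (ball (0 : H) ρ) := isOpen_ball.measure_pos _ (nonempty_ball.2 hρ)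
    _ = μH[d] (ball (0 : H) ρ) := by rw [hH]
    _ ≤ μH[d] (H.orthogonalProjectionOnto '' (frontier Ω ∩ V)) := measure_mono hsub
    _ ≤ μH[d] (frontier Ω ∩ V) :=
        hausdorffMeasure_orthogonalProjectionOnto_le H d _ (Nat.cast_nonneg d)

lemma neZero_restrict_frontier (hd : finrank ℝ E = d + 1) (hΩ : Convex ℝ Ω)
    (h0 : Ω ∈ 𝓝 (0 : E)) (hbd : Bornology.IsBounded Ω) :
    NeZero (μH[d].restrict (frontier Ω)) := by
  have : Nontrivial E := nontrivial_of_finrank_eq_succ hd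
  obtain ⟨z, hz⟩ := frontier_nonempty_of_isBounded ⟨0, mem_of_mem_nhds h0⟩ hbd
  refine ⟨Measure.measure_univ_ne_zero.1 ?_⟩
  simpa using (hausdorffMeasure_frontier_inter_pos hd hΩ h0 isOpen_univ hz trivial).ne'

end Hausdorff

lemma lipschitzOnWith_inv_smul {E : Type*} [NormedAddCommGroup E] [NormedSpace ℝ E]
    {g : E → ℝ} {K : ℝ≥0} (hg : LipschitzWith K g) {s : Set E} {c M : ℝ} (hc : 0 < c)
    (hgc : ∀ x ∈ s, c ≤ g x) (hM : ∀ x ∈ s, ‖x‖ ≤ M) :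
    LipschitzOnWith (M * K / c ^ 2 + c⁻¹).toNNReal (fun x => (g x)⁻¹ • x) s := by
  refine lipschitzOnWith_iff_norm_sub_le.2 fun x hx y hy => ?_
  have hgx := hc.trans_le (hgc x hx)
  have hgy := hc.trans_le (hgc y hy)
  have hM0 : 0 ≤ M := (norm_nonneg x).trans (hM x hx)
  have hinv : |(g x)⁻¹ - (g y)⁻¹| ≤ K / c ^ 2 * ‖x - y‖ := by
    rw [inv_sub_inv hgx.ne' hgy.ne', abs_div, abs_of_pos (mul_pos hgx hgy), abs_sub_comm,
      div_le_iff₀ (mul_pos hgx hgy)]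
    calc |g x - g y| ≤ K * ‖x - y‖ := by
          simpa [dist_eq_norm, Real.dist_eq] using hg.dist_le_mul x y
      _ = K / c ^ 2 * ‖x - y‖ * c ^ 2 := by field_simp
      _ ≤ K / c ^ 2 * ‖x - y‖ * (g x * g y) := by gcongr; nlinarith [hgc x hx, hgc y hy]
  have hsplit : (g x)⁻¹ • x - (g y)⁻¹ • y = ((g x)⁻¹ - (g y)⁻¹) • x + (g y)⁻¹ • (x - y) := by
    module
  rw [Real.coe_toNNReal _ (by positivity), hsplit]
  calc ‖((g x)⁻¹ - (g y)⁻¹) • x + (g y)⁻¹ • (x - y)‖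
      ≤ |(g x)⁻¹ - (g y)⁻¹| * ‖x‖ + (g y)⁻¹ * ‖x - y‖ := by
        grw [norm_add_le, norm_smul, norm_smul, Real.norm_eq_abs, Real.norm_eq_abs,
          abs_of_pos (inv_pos.2 hgy)]
    _ ≤ K / c ^ 2 * ‖x - y‖ * M + c⁻¹ * ‖x - y‖ := by
        gcongr
        · exact hM x hx
        · exact hgc y hy
    _ = (M * K / c ^ 2 + c⁻¹) * ‖x - y‖ := by ring

lemma exists_finset_norm_le_two_inner (E : Type*) [NormedAddCommGroup E] [InnerProductSpace ℝ E]
    [FiniteDimensional ℝ E] :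
    ∃ T : Finset E, (∀ v ∈ T, ‖v‖ = 1) ∧ ∀ y : E, y ≠ 0 → ∃ v ∈ T, ‖y‖ ≤ 2 * ⟪v, y⟫ := by
  obtain ⟨T, hTs, hcover⟩ := (isCompact_sphere (0 : E) 1).elim_nhds_subcover
    (fun v => {u | ‖u‖ < 2 * ⟪v, u⟫}) fun v hv => by
      refine (isOpen_lt continuous_norm (by fun_prop)).mem_nhds ?_
      rw [mem_sphere_zero_iff_norm] at hv
      simp [hv]
  refine ⟨T, fun v hv => mem_sphere_zero_iff_norm.1 (hTs v hv), fun y hy => ?_⟩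
  have hy' : 0 < ‖y‖ := norm_pos_iff.2 hy
  obtain ⟨v, hv, hlt⟩ := mem_iUnion₂.1 <| hcover <| show ‖y‖⁻¹ • y ∈ sphere (0 : E) 1 by
    rw [mem_sphere_zero_iff_norm, norm_smul, norm_inv, norm_norm, inv_mul_cancel₀ hy'.ne']
  refine ⟨v, hv, ?_⟩
  rw [mem_ofPred_eq, norm_smul, norm_inv, norm_norm, inv_mul_cancel₀ hy'.ne',
    real_inner_smul_right] at hlt
  nlinarith [mul_inv_cancel₀ hy'.ne']

section HausdorffFinite

variable {E : Type*} [NormedAddCommGroup E] [InnerProductSpace ℝ E] {Ω : Set E} {v : E}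

lemma exists_lipschitzOnWith_inv_gauge_smul_add (hΩ : Convex ℝ Ω) (h0 : Ω ∈ 𝓝 (0 : E))
    (hbd : Bornology.IsBounded Ω) (hv : ‖v‖ = 1) :
    ∃ K, LipschitzOnWith K (fun w : (ℝ ∙ v)ᗮ => (gauge Ω (v + w))⁻¹ • (v + (w : E)))
      (closedBall 0 3) := by
  obtain ⟨K, hK⟩ := hΩ.lipschitz_gauge h0
  obtain ⟨R, hR, hΩR⟩ := hbd.subset_closedBall_lt 0 0
  set A : Set E := {x | 1 ≤ ‖x‖ ∧ ‖x‖ ≤ 4}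
  have hφ := lipschitzOnWith_inv_smul hK (s := A) (M := 4) (inv_pos.2 hR)
    (fun x hx => (inv_eq_one_div R).trans_le <| (div_le_div_of_nonneg_right hx.1 hR.le).trans <|
      le_gauge_of_subset_closedBall (absorbent_nhds_zero h0) hR.le hΩR) (fun x hx => hx.2)
  have hι : LipschitzWith 1 fun w : (ℝ ∙ v)ᗮ => v + (w : E) :=
    ((IsometryEquiv.addLeft v).isometry.comp isometry_subtype_coe).lipschitz
  have hmaps : MapsTo (fun w : (ℝ ∙ v)ᗮ => v + (w : E)) (closedBall 0 3) A := by
    intro w hw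
    replace hw : ‖(w : E)‖ ≤ 3 := mem_closedBall_zero_iff.1 hw
    have hpyth := norm_add_sq_eq_norm_sq_add_norm_sq_real
      (Submodule.mem_orthogonal_singleton_iff_inner_right.1 w.2)
    rw [hv] at hpyth
    refine ⟨?_, ?_⟩
    · nlinarith [norm_nonneg (v + (w : E))]
    · linarith [norm_add_le v (w : E)]
  exact ⟨_, hφ.comp hι.lipschitzOnWith hmaps⟩

lemma frontier_inter_cone_subset_image (hΩ : Convex ℝ Ω) (h0 : Ω ∈ 𝓝 (0 : E))
    (hv : ‖v‖ = 1) : frontier Ω ∩ {y | ‖y‖ ≤ 2 * ⟪v, y⟫} ⊆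
      (fun w : (ℝ ∙ v)ᗮ => (gauge Ω (v + w))⁻¹ • (v + (w : E))) '' closedBall 0 3 := by
  rintro y ⟨hy, hcone⟩
  have hgy : gauge Ω y = 1 := (gauge_eq_one_iff_mem_frontier hΩ h0).2 hy
  have hy0 : y ≠ 0 := by
    rintro rfl
    simp at hgy
  set c := ⟪v, y⟫
  have hc : 0 < c := by
    rw [mem_ofPred_eq] at hcone
    linarith [norm_pos_iff.2 hy0]
  have hw : c⁻¹ • y - v ∈ (ℝ ∙ v)ᗮ := by
    rw [Submodule.mem_orthogonal_singleton_iff_inner_right, inner_sub_right,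
      real_inner_smul_right, real_inner_self_eq_norm_sq, hv, inv_mul_cancel₀ hc.ne']
    norm_num
  refine ⟨⟨c⁻¹ • y - v, hw⟩, ?_, ?_⟩
  · rw [mem_closedBall_zero_iff, Submodule.coe_norm]
    calc ‖c⁻¹ • y - v‖ ≤ ‖c⁻¹ • y‖ + ‖v‖ := norm_sub_le _ _
      _ = c⁻¹ * ‖y‖ + 1 := by rw [norm_smul, Real.norm_of_nonneg (inv_nonneg.2 hc.le), hv]
      _ ≤ c⁻¹ * (2 * c) + 1 := by gcongr; exact hcone
      _ = 3 := by field_simp; norm_num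
  · simp only [add_sub_cancel, gauge_smul_of_nonneg (inv_nonneg.2 hc.le), hgy, smul_eq_mul,
      mul_one, inv_inv, smul_smul, mul_inv_cancel₀ hc.ne', one_smul]

variable [FiniteDimensional ℝ E] [MeasurableSpace E] [BorelSpace E] {d : ℕ}

lemma hausdorffMeasure_frontier_inter_cone_lt_top (hd : finrank ℝ E = d + 1)
    (hΩ : Convex ℝ Ω) (h0 : Ω ∈ 𝓝 (0 : E)) (hbd : Bornology.IsBounded Ω) (hv : ‖v‖ = 1) :
    μH[d] (frontier Ω ∩ {y | ‖y‖ ≤ 2 * ⟪v, y⟫}) < ⊤ := by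
  have : Fact (finrank ℝ E = d + 1) := ⟨hd⟩
  have hH : finrank ℝ (ℝ ∙ v)ᗮ = d :=
    Submodule.finrank_orthogonal_span_singleton (norm_ne_zero_iff.1 (by simp [hv]))
  obtain ⟨K, hK⟩ := exists_lipschitzOnWith_inv_gauge_smul_add hΩ h0 hbd hv
  calc μH[d] (frontier Ω ∩ {y | ‖y‖ ≤ 2 * ⟪v, y⟫})
      ≤ μH[d] ((fun w : (ℝ ∙ v)ᗮ => (gauge Ω (v + w))⁻¹ • (v + (w : E))) '' closedBall 0 3) :=
        measure_mono (frontier_inter_cone_subset_image hΩ h0 hv)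
    _ ≤ K ^ (d : ℝ) * μH[d] (closedBall (0 : (ℝ ∙ v)ᗮ) 3) :=
        hK.hausdorffMeasure_image_le (Nat.cast_nonneg d)
    _ < ⊤ := by
        refine ENNReal.mul_lt_top (ENNReal.rpow_lt_top_of_nonneg (Nat.cast_nonneg d)
          ENNReal.coe_ne_top) ?_
        rw [← hH]
        exact isBounded_closedBall.measure_lt_top

lemma hausdorffMeasure_frontier_lt_top (hd : finrank ℝ E = d + 1) (hΩ : Convex ℝ Ω)
    (h0 : Ω ∈ 𝓝 (0 : E)) (hbd : Bornology.IsBounded Ω) : μH[d] (frontier Ω) < ⊤ := by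
  obtain ⟨T, hT1, hT⟩ := exists_finset_norm_le_two_inner E
  have hcover : frontier Ω ⊆ ⋃ v ∈ (T : Set E), frontier Ω ∩ {y | ‖y‖ ≤ 2 * ⟪v, y⟫} := by
    intro y hy
    have hy0 : y ≠ 0 := by
      rintro rfl
      exact hy.2 (mem_interior_iff_mem_nhds.2 h0)
    obtain ⟨v, hv, hle⟩ := hT y hy0
    exact mem_biUnion hv ⟨hy, hle⟩
  exact (measure_mono hcover).trans_lt <| measure_biUnion_lt_top T.finite_toSet fun v hv =>
    hausdorffMeasure_frontier_inter_cone_lt_top hd hΩ h0 hbd (hT1 v hv)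

lemma isFiniteMeasure_restrict_frontier (hd : finrank ℝ E = d + 1) (hΩ : Convex ℝ Ω)
    (h0 : Ω ∈ 𝓝 (0 : E)) (hbd : Bornology.IsBounded Ω) :
    IsFiniteMeasure (μH[d].restrict (frontier Ω)) :=
  ⟨by simpa using hausdorffMeasure_frontier_lt_top hd hΩ h0 hbd⟩

end HausdorffFinite

section WeightedMean

variable {α : Type*} [MeasurableSpace α] {μ : Measure α} {f w : α → ℝ} {M : ℝ}

lemma integral_pos_of_ae_pos [NeZero μ] (hw : Integrable w μ) (hw0 : ∀ᵐ x ∂μ, 0 < w x) :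
    0 < ∫ x, w x ∂μ := by
  refine (integral_pos_iff_support_of_nonneg_ae (hw0.mono fun x hx => hx.le) hw).2 ?_
  refine pos_iff_ne_zero.2 fun h => NeZero.ne μ (ae_eq_bot.1 (eventually_false_iff_eq_bot.1 ?_))
  filter_upwards [hw0, measure_eq_zero_iff_ae_notMem.1 h] with x hx hx' using hx' hx.ne'

lemma integrable_mul_of_ae_mem_Icc (hw : Integrable w μ) (hf : AEStronglyMeasurable f μ)
    (hfM : ∀ᵐ x ∂μ, f x ∈ Icc 0 M) : Integrable (fun x => f x * w x) μ :=
  hw.bdd_mul hf <| by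
    filter_upwards [hfM] with x hx using by rw [Real.norm_eq_abs, abs_of_nonneg hx.1]; exact hx.2

lemma integral_mul_div_integral_le [NeZero μ] (hw : Integrable w μ)
    (hw0 : ∀ᵐ x ∂μ, 0 < w x) (hf : AEStronglyMeasurable f μ) (hfM : ∀ᵐ x ∂μ, f x ∈ Icc 0 M) :
    (∫ x, f x * w x ∂μ) / ∫ x, w x ∂μ ≤ M := by
  rw [div_le_iff₀ (integral_pos_of_ae_pos hw hw0), ← integral_const_mul]
  refine integral_mono_ae (integrable_mul_of_ae_mem_Icc hw hf hfM) (hw.const_mul M) ?_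
  filter_upwards [hw0, hfM] with x hw hM using mul_le_mul_of_nonneg_right hM.2 hw.le

lemma integral_mul_div_integral_eq_iff [NeZero μ] (hw : Integrable w μ)
    (hw0 : ∀ᵐ x ∂μ, 0 < w x) (hf : AEStronglyMeasurable f μ) (hfM : ∀ᵐ x ∂μ, f x ∈ Icc 0 M) :
    (∫ x, f x * w x ∂μ) / ∫ x, w x ∂μ = M ↔ f =ᵐ[μ] fun _ => M := by
  have hfw := integrable_mul_of_ae_mem_Icc hw hf hfM
  have hgap : 0 ≤ᵐ[μ] fun x => M * w x - f x * w x := by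
    filter_upwards [hw0, hfM] with x hw hM using
      sub_nonneg.2 (mul_le_mul_of_nonneg_right hM.2 hw.le)
  rw [div_eq_iff (integral_pos_of_ae_pos hw hw0).ne', ← integral_const_mul, eq_comm,
    ← sub_eq_zero, ← integral_sub (hw.const_mul M) hfw,
    integral_eq_zero_iff_of_nonneg_ae hgap ((hw.const_mul M).sub hfw)]
  refine ⟨fun h => ?_, fun h => ?_⟩
  · filter_upwards [h, hw0] with x hx hw
    exact (mul_right_cancel₀ hw.ne' (sub_eq_zero.1 hx)).symm
  · filter_upwards [h] with x hx
    simp [hx]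

end WeightedMean

lemma integrable_comp_of_ae_mem_compact {X E : Type*} [MeasurableSpace X] {μ : Measure X}
    [IsFiniteMeasure μ] [TopologicalSpace E] [MeasurableSpace E] [OpensMeasurableSpace E]
    {K : Set E} (hK : IsCompact K) {F : E → ℝ} (hF : Continuous F) {ν : X → E}
    (hν : Measurable ν) (hνK : ∀ᵐ x ∂μ, ν x ∈ K) : Integrable (fun x => F (ν x)) μ := by
  obtain ⟨C, hC⟩ := hK.exists_bound_of_continuousOn hF.continuousOn
  exact .of_bound (hF.measurable.comp hν).aestronglyMeasurable C (hνK.mono fun x hx => hC _ hx)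

lemma ae_restrict_eq_iff_eqOn {X Y : Type*} [TopologicalSpace X] [MeasurableSpace X]
    [OpensMeasurableSpace X] [TopologicalSpace Y] [T2Space Y] {μ : Measure X} {S : Set X}
    (hS : MeasurableSet S) (hpos : ∀ z ∈ S, ∀ V, IsOpen V → z ∈ V → 0 < μ (S ∩ V))
    {f g : X → Y} (hf : Continuous f) (hg : Continuous g) :
    f =ᵐ[μ.restrict S] g ↔ EqOn f g S := by
  refine ⟨fun h z hz => by_contra fun hne => ?_, fun h => ae_restrict_of_forall_mem hS h⟩
  have hopen : IsOpen {x | f x ≠ g x} := isOpen_ne_fun hf hg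
  have hnull : μ.restrict S {x | f x ≠ g x} = 0 := h
  rw [Measure.restrict_apply hopen.measurableSet, inter_comm] at hnull
  exact (hpos z hz _ hopen hne).ne' hnull

theorem momentum_perimeter_ratio_le_rmax_general (n : ℕ) (hn : 2 ≤ n)
    (Ω : Set (EuclideanSpace ℝ (Fin n)))
    (hbd : Bornology.IsBounded Ω) (hop : IsOpen Ω) (hconvΩ : Convex ℝ Ω)
    (h0 : (0 : EuclideanSpace ℝ (Fin n)) ∈ Ω)
    (ν : EuclideanSpace ℝ (Fin n) → EuclideanSpace ℝ (Fin n))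
    (hνmeas : Measurable ν)
    (hνunit : ∀ x ∈ frontier Ω, ‖ν x‖ = 1)
    (F : EuclideanSpace ℝ (Fin n) → ℝ) (a : ℝ) (ha : 0 < a)
    (hconv : ConvexOn ℝ Set.univ F)
    (hlow : ∀ ξ, a * ‖ξ‖ ≤ F ξ)
    (p : ℝ) (hp : 1 < p) :
    (∫ x in frontier Ω, (polar F x) ^ p * F (ν x) ∂(μH[(n : ℝ) - 1])) /
      (∫ x in frontier Ω, F (ν x) ∂(μH[(n : ℝ) - 1])) ≤
      (sSup (polar F '' closure Ω)) ^ p ∧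
    ((∫ x in frontier Ω, (polar F x) ^ p * F (ν x) ∂(μH[(n : ℝ) - 1])) /
      (∫ x in frontier Ω, F (ν x) ∂(μH[(n : ℝ) - 1])) =
      (sSup (polar F '' closure Ω)) ^ p ↔
      ∃ r : ℝ, 0 < r ∧ Ω = {ξ : EuclideanSpace ℝ (Fin n) | polar F ξ < r}) := by
  obtain ⟨d, rfl⟩ : ∃ d, n = d + 1 := ⟨n - 1, by omega⟩
  have hdim : finrank ℝ (EuclideanSpace ℝ (Fin (d + 1))) = d + 1 := finrank_euclideanSpace_fin
  rw [show ((d + 1 : ℕ) : ℝ) - 1 = d by push_cast; ring]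
  have hnhds := hop.mem_nhds h0
  have := isFiniteMeasure_restrict_frontier hdim hconvΩ hnhds hbd
  have := neZero_restrict_frontier hdim hconvΩ hnhds hbd
  have hfr : ∀ᵐ x ∂μH[(d : ℝ)].restrict (frontier Ω), x ∈ frontier Ω :=
    ae_restrict_mem isClosed_frontier.measurableSet
  have hpolar : Continuous (polar F) := (lipschitzWith_polar ha hlow).continuous
  have hf : Continuous fun x => polar F x ^ p := hpolar.rpow_const fun _ => Or.inr (by linarith)
  have hfR := hfr.mono fun x hx => polar_rpow_mem_Icc ha hlow hbd (p := p) (by linarith)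
    (frontier_subset_closure hx)
  have hw := integrable_comp_of_ae_mem_compact (isCompact_sphere 0 1)
    (continuousOn_univ.1 (hconv.continuousOn isOpen_univ)) hνmeas
    (hfr.mono fun x hx => mem_sphere_zero_iff_norm.2 (hνunit x hx))
  have hw0 : ∀ᵐ x ∂μH[(d : ℝ)].restrict (frontier Ω), 0 < F (ν x) := hfr.mono fun x hx =>
    ha.trans_le (by simpa [hνunit x hx] using hlow (ν x))
  refine ⟨integral_mul_div_integral_le hw hw0 hf.aestronglyMeasurable hfR, ?_⟩
  rw [integral_mul_div_integral_eq_iff hw hw0 hf.aestronglyMeasurable hfR,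
    ae_restrict_eq_iff_eqOn isClosed_frontier.measurableSet
      (fun z hz V hV hzV => hausdorffMeasure_frontier_inter_pos hdim hconvΩ hnhds hV hz hzV)
      hf continuous_const,
    ← forall_frontier_eq_sSup_iff hop hconvΩ h0 hbd hpolar
      (fun t ht x => polar_smul_of_nonneg F ht x) (fun x hx => polar_pos ha hlow hx)]
  exact forall₂_congr fun x _ => Real.rpow_left_inj (polar_nonneg ha hlow x)
    (Real.sSup_nonneg (forall_mem_image.2 fun x _ => polar_nonneg ha hlow x)) (by positivity)

theorem momentum_perimeter_ratio_le_rmax (n : ℕ) (hn : 2 ≤ n)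
    (Ω : Set (EuclideanSpace ℝ (Fin n)))
    (hbd : Bornology.IsBounded Ω) (hop : IsOpen Ω) (hconvΩ : Convex ℝ Ω)
    (h0 : (0 : EuclideanSpace ℝ (Fin n)) ∈ Ω)
    (ν : EuclideanSpace ℝ (Fin n) → EuclideanSpace ℝ (Fin n))
    (hνmeas : Measurable ν)
    (hνunit : ∀ x ∈ frontier Ω, ‖ν x‖ = 1)
    (F : EuclideanSpace ℝ (Fin n) → ℝ) (a : ℝ) (ha : 0 < a)
    (hF0 : ∀ ξ, 0 ≤ F ξ)
    (hconv : ConvexOn ℝ Set.univ F)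
    (hhom : ∀ (t : ℝ) (ξ : EuclideanSpace ℝ (Fin n)), F (t • ξ) = |t| * F ξ)
    (hlow : ∀ ξ, a * ‖ξ‖ ≤ F ξ)
    (p : ℝ) (hp : 1 < p) :
    (∫ x in frontier Ω, (polar F x) ^ p * F (ν x) ∂(μH[(n : ℝ) - 1])) /
      (∫ x in frontier Ω, F (ν x) ∂(μH[(n : ℝ) - 1])) ≤
      (sSup (polar F '' closure Ω)) ^ p ∧
    ((∫ x in frontier Ω, (polar F x) ^ p * F (ν x) ∂(μH[(n : ℝ) - 1])) /
      (∫ x in frontier Ω, F (ν x) ∂(μH[(n : ℝ) - 1])) =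
      (sSup (polar F '' closure Ω)) ^ p ↔
      ∃ r : ℝ, 0 < r ∧ Ω = {ξ : EuclideanSpace ℝ (Fin n) | polar F ξ < r}) :=
  momentum_perimeter_ratio_le_rmax_general n hn Ω hbd hop hconvΩ h0 ν hνmeas hνunit F a ha hconv
    hlow p hp
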